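/- arXiv:2507.19866 — 2 statements merged into one kernel-verified Lean document; each statement's English description precedes it below -/
import Mathlib

section
/- Let N ≥ 2 be an integer, A := (N²/(N−1))^{N−1}, M > 0 and T ∈ (0,∞]. Suppose U : [0,1]×[0,T) → ℝ is continuous, nonnegative, with U(·,t) ∈ C¹([0,1]) for every t, C^{2,1} on (0,1]×(0,T), nondecreasing in ξ, satisfying U_t = N² ξ^{2−2/N} U_{ξξ} + N ξ^{1−2/N} U^{1/(N−1)} U_ξ on (0,1)×(0,T), with U(0,t) = 0 and U(1,t) = M for all t ∈ (0,T). Then the moment function ψ(t) := ∫₀¹ U(ξ,t) ξ^{2/N−1} dξ satisfies ψ(t) − ψ(0) ≥ N² M ((M/A)^{1/(N−1)} − 1)·t for all t ∈ (0,T). -/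
/-!
Multiplied by `ξ^{2/N-1}`, the equation is in divergence form:
`ξ^{2/N-1} U_t = ∂_ξ F` with `F = N²ξU_ξ - N²U + (N-1)U^{N/(N-1)}`. Integrating over
`[α,1] × [s,t]` expresses the change of the truncated moment `∫_α^1 U ξ^{2/N-1}` as
`∫_s^t (F(1,τ) - F(α,τ)) dτ`. Since `U_ξ ≥ 0` and `U(1,τ) = M`, the boundary flux satisfies
`F(1,τ) ≥ (N-1)M^{N/(N-1)} - N²M = N²M((M/A)^{1/(N-1)} - 1)`. At the inner end nothing is known
about `ξU_ξ` pointwise, but averaging `α` over `[b/2,b]` bounds it by `2(U(b) - U(b/2))`, which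
tends to `0` with `b` because `U(0,τ) = 0`; the part `∫_0^α` of the moment is `O(α^{2/N})`.
This gives the inequality between any two positive times, and `s → 0` follows from the
continuity of the moment.
-/

open Set MeasureTheory Filter Topology Function

theorem ContinuousOn.intervalIntegral_swap {F : ℝ → ℝ → ℝ} {a b c d : ℝ}
    (hF : ContinuousOn (uncurry F) (uIcc a b ×ˢ uIcc c d)) :
    ∫ x in a..b, ∫ y in c..d, F x y = ∫ y in c..d, ∫ x in a..b, F x y :=
  intervalIntegral_intervalIntegral_swap <|
    (hF.integrableOn_compact (isCompact_uIcc.prod isCompact_uIcc)).mono_set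
      (prod_mono uIoc_subset_uIcc uIoc_subset_uIcc)

theorem ContinuousOn.continuousOn_intervalIntegral_mul {f : ℝ → ℝ → ℝ} {w : ℝ → ℝ}
    {K : Set ℝ} {a b : ℝ} (hK : IsCompact K) (hf : ContinuousOn (uncurry f) (K ×ˢ uIcc a b))
    (hw : IntervalIntegrable w volume a b) :
    ContinuousOn (fun x => ∫ y in a..b, f x y * w y) K := by
  obtain ⟨C, hC⟩ := (hK.prod isCompact_uIcc).exists_bound_of_continuousOn hf
  intro x₀ hx₀
  refine intervalIntegral.continuousWithinAt_of_dominated_interval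
    (bound := fun y => C * ‖w y‖) ?_ ?_ (hw.norm.const_mul C) ?_
  · filter_upwards [self_mem_nhdsWithin] with x hx
    exact ((hf.uncurry_left x hx).mono uIoc_subset_uIcc).aestronglyMeasurable
      measurableSet_uIoc |>.mul hw.def'.aestronglyMeasurable
  · filter_upwards [self_mem_nhdsWithin] with x hx
    refine ae_of_all _ fun y hy => ?_
    rw [norm_mul]
    exact mul_le_mul_of_nonneg_right (hC (x, y) ⟨hx, uIoc_subset_uIcc hy⟩) (norm_nonneg _)
  · exact ae_of_all _ fun y hy =>
      (hf.uncurry_right y (uIoc_subset_uIcc hy) x₀ hx₀).mul continuousWithinAt_const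

theorem ContinuousOn.intervalIntegrable_intervalIntegral {F : ℝ → ℝ → ℝ} {a b c d : ℝ}
    (hF : ContinuousOn (uncurry F) (uIcc a b ×ˢ uIcc c d)) :
    IntervalIntegrable (fun x => ∫ y in c..d, F x y) volume a b := by
  simpa using (hF.continuousOn_intervalIntegral_mul isCompact_uIcc (w := fun _ => 1)
    intervalIntegrable_const).intervalIntegrable

theorem integral_sub_eq_integral_sub_of_hasDerivAt {V g F : ℝ → ℝ → ℝ} {a b c d : ℝ}
    (hab : a ≤ b) (hcd : c ≤ d)
    (hV : ∀ x ∈ Icc a b, ∀ τ ∈ Icc c d, HasDerivAt (V x ·) (g x τ) τ)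
    (hF : ∀ τ ∈ Icc c d, ∀ x ∈ Ioo a b, HasDerivAt (F · τ) (g x τ) x)
    (hFc : ∀ τ ∈ Icc c d, ContinuousOn (F · τ) (Icc a b))
    (hg : ContinuousOn (uncurry g) (Icc a b ×ˢ Icc c d)) :
    ∫ x in a..b, (V x d - V x c) = ∫ τ in c..d, (F b τ - F a τ) := by
  rw [← uIcc_of_le hab, ← uIcc_of_le hcd] at hg
  calc ∫ x in a..b, (V x d - V x c) = ∫ x in a..b, ∫ τ in c..d, g x τ := by
        refine intervalIntegral.integral_congr fun x hx => ?_
        refine (intervalIntegral.integral_eq_sub_of_hasDerivAt (fun τ hτ => ?_)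
          (hg.uncurry_left x hx).intervalIntegrable).symm
        rw [uIcc_of_le hab] at hx
        rw [uIcc_of_le hcd] at hτ
        exact hV x hx τ hτ
    _ = ∫ τ in c..d, ∫ x in a..b, g x τ := hg.intervalIntegral_swap
    _ = ∫ τ in c..d, (F b τ - F a τ) := by
        refine intervalIntegral.integral_congr fun τ hτ => ?_
        have hg' := (hg.uncurry_right τ hτ).intervalIntegrable (μ := volume)
        rw [uIcc_of_le hcd] at hτ
        exact intervalIntegral.integral_eq_sub_of_hasDeriv_right_of_le hab (hFc τ hτ)
          (fun x hx => (hF τ hτ x hx).hasDerivWithinAt) hg'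

theorem neg_mul_integral_rpow_le {f : ℝ → ℝ} {M r α : ℝ} (hr : -1 < r) (hα : 0 ≤ α)
    (hf : IntervalIntegrable (fun ξ => f ξ * ξ ^ r) volume 0 α)
    (hM : ∀ ξ ∈ Icc 0 α, -M ≤ f ξ) :
    -M * (α ^ (r + 1) / (r + 1)) ≤ ∫ ξ in (0:ℝ)..α, f ξ * ξ ^ r := by
  calc -M * (α ^ (r + 1) / (r + 1)) = ∫ ξ in (0:ℝ)..α, -M * ξ ^ r := by
        rw [intervalIntegral.integral_const_mul, integral_rpow (Or.inl hr),
          Real.zero_rpow (by linarith), sub_zero]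
    _ ≤ ∫ ξ in (0:ℝ)..α, f ξ * ξ ^ r :=
        intervalIntegral.integral_mono_on hα
          ((intervalIntegral.intervalIntegrable_rpow' hr).const_mul _) hf fun ξ hξ =>
            mul_le_mul_of_nonneg_right (hM ξ hξ) (Real.rpow_nonneg hξ.1 r)

noncomputable def flux (n ξ u u' : ℝ) : ℝ :=
  n ^ 2 * ξ * u' - n ^ 2 * u + (n - 1) * u ^ (n / (n - 1))

theorem hasDerivAt_flux {n ξ u'' : ℝ} {u u' : ℝ → ℝ} (hn : 1 < n)
    (hu : HasDerivAt u (u' ξ) ξ) (hu' : HasDerivAt u' u'' ξ) :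
    HasDerivAt (fun x => flux n x (u x) (u' x))
      (n ^ 2 * ξ * u'' + n * u ξ ^ (1 / (n - 1)) * u' ξ) ξ := by
  have hn₁ : n - 1 ≠ 0 := by linarith
  have hpow := (Real.hasDerivAt_rpow_const (x := u ξ) (p := n / (n - 1))
    (Or.inr ((one_le_div (by linarith)).mpr (by linarith)))).comp ξ hu
  have key : HasDerivAt
      (fun x => n ^ 2 * (x * u' x) - n ^ 2 * u x + (n - 1) * u x ^ (n / (n - 1)))
      (n ^ 2 * (1 * u' ξ + ξ * u'') - n ^ 2 * u' ξ
        + (n - 1) * (n / (n - 1) * u ξ ^ (n / (n - 1) - 1) * u' ξ)) ξ :=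
    ((((hasDerivAt_id' ξ).mul hu').const_mul _).sub (hu.const_mul _)).add (hpow.const_mul _)
  convert key using 1
  · ext x
    simp only [flux]
    ring
  · rw [show n / (n - 1) - 1 = 1 / (n - 1) by field_simp; ring]
    field_simp
    ring

theorem rpow_mul_rhs_eq {n ξ a b : ℝ} (hξ : 0 < ξ) :
    ξ ^ (2 / n - 1) * (n ^ 2 * ξ ^ ((2:ℝ) - 2 / n) * a + n * ξ ^ ((1:ℝ) - 2 / n) * b)
      = n ^ 2 * ξ * a + n * b := by
  have h₂ : ξ ^ (2 / n - 1) * ξ ^ ((2:ℝ) - 2 / n) = ξ := by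
    rw [← Real.rpow_add hξ]
    ring_nf
    exact Real.rpow_one ξ
  have h₁ : ξ ^ (2 / n - 1) * ξ ^ ((1:ℝ) - 2 / n) = 1 := by
    rw [← Real.rpow_add hξ]
    ring_nf
    exact Real.rpow_zero ξ
  linear_combination (n ^ 2 * a) * h₂ + (n * b) * h₁

theorem sub_one_mul_rpow_eq {n M A : ℝ} (hn : 1 < n) (hM : 0 < M)
    (hA : A = (n ^ 2 / (n - 1)) ^ (n - 1)) :
    (n - 1) * M ^ (n / (n - 1)) = n ^ 2 * M * (M / A) ^ (1 / (n - 1)) := by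
  have hn₁ : n - 1 ≠ 0 := by linarith
  have hA' : A ^ (1 / (n - 1)) = n ^ 2 / (n - 1) := by
    rw [hA, ← Real.rpow_mul (by positivity), mul_one_div_cancel hn₁, Real.rpow_one]
  rw [Real.div_rpow hM.le (by rw [hA]; positivity), hA',
    show n / (n - 1) = 1 + 1 / (n - 1) by field_simp; ring, Real.rpow_add hM, Real.rpow_one]
  field_simp

theorem le_flux_one {n M A u' : ℝ} (hn : 1 < n) (hM : 0 < M)
    (hA : A = (n ^ 2 / (n - 1)) ^ (n - 1)) (hu' : 0 ≤ u') :
    n ^ 2 * M * ((M / A) ^ (1 / (n - 1)) - 1) ≤ flux n 1 M u' := by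
  rw [flux, sub_one_mul_rpow_eq hn hM hA]
  nlinarith [mul_nonneg (sq_nonneg n) hu']

theorem integral_flux_le {n a b ε : ℝ} {u u' : ℝ → ℝ} (hn : 1 < n) (ha : 0 ≤ a) (hab : a ≤ b)
    (hu : ∀ x ∈ Ioo a b, HasDerivAt u (u' x) x) (huc : ContinuousOn u (Icc a b))
    (hu'c : ContinuousOn u' (Icc a b)) (hu' : ∀ x ∈ Icc a b, 0 ≤ u' x)
    (hu₀ : ∀ x ∈ Icc a b, 0 ≤ u x) (huε : ∀ x ∈ Icc a b, u x ≤ ε) :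
    ∫ x in a..b, flux n x (u x) (u' x)
      ≤ n ^ 2 * b * ε + (b - a) * ((n - 1) * ε ^ (n / (n - 1))) := by
  have hp : 0 ≤ n / (n - 1) := div_nonneg (by linarith) (by linarith)
  rw [← uIcc_of_le hab] at huc hu'c
  have hu'i : IntervalIntegrable u' volume a b := hu'c.intervalIntegrable
  have hfi : IntervalIntegrable (fun x => flux n x (u x) (u' x)) volume a b :=
    ((((continuousOn_const.mul continuousOn_id).mul hu'c).sub (continuousOn_const.mul huc)).add
      (continuousOn_const.mul (huc.rpow_const fun _ _ => Or.inr hp))).intervalIntegrable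
  rw [uIcc_of_le hab] at huc
  have hbound : ∀ x ∈ Icc a b,
      flux n x (u x) (u' x) ≤ n ^ 2 * b * u' x + (n - 1) * ε ^ (n / (n - 1)) := by
    intro x hx
    have := mul_le_mul_of_nonneg_right hx.2 (mul_nonneg (sq_nonneg n) (hu' x hx))
    have := Real.rpow_le_rpow (hu₀ x hx) (huε x hx) hp
    have := mul_nonneg (sq_nonneg n) (hu₀ x hx)
    simp only [flux]
    nlinarith
  calc ∫ x in a..b, flux n x (u x) (u' x)
      ≤ ∫ x in a..b, (n ^ 2 * b * u' x + (n - 1) * ε ^ (n / (n - 1))) :=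
        intervalIntegral.integral_mono_on hab hfi
          ((hu'i.const_mul _).add intervalIntegrable_const) hbound
    _ = n ^ 2 * b * (u b - u a) + (b - a) * ((n - 1) * ε ^ (n / (n - 1))) := by
        rw [intervalIntegral.integral_add (hu'i.const_mul _) intervalIntegrable_const,
          intervalIntegral.integral_const_mul, intervalIntegral.integral_const, smul_eq_mul,
          intervalIntegral.integral_eq_sub_of_hasDeriv_right_of_le hab huc
            (fun x hx => (hu x hx).hasDerivWithinAt) hu'i]
    _ ≤ n ^ 2 * b * ε + (b - a) * ((n - 1) * ε ^ (n / (n - 1))) := by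
        have := hu₀ a (left_mem_Icc.mpr hab)
        have := huε b (right_mem_Icc.mpr hab)
        have : 0 ≤ n ^ 2 * b := mul_nonneg (sq_nonneg n) (ha.trans hab)
        nlinarith

noncomputable def weightedMoment (r : ℝ) (u : ℝ → ℝ) : ℝ := ∫ ξ in (0:ℝ)..1, u ξ * ξ ^ r

theorem intervalIntegrable_mul_rpow {u : ℝ → ℝ} {r b : ℝ} (hr : -1 < r) (hb : 0 ≤ b)
    (hu : ContinuousOn u (Icc 0 b)) : IntervalIntegrable (fun ξ => u ξ * ξ ^ r) volume 0 b :=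
  (intervalIntegral.intervalIntegrable_rpow' hr).continuousOn_mul (by rwa [uIcc_of_le hb])

theorem continuousOn_weightedMoment {U : ℝ → ℝ → ℝ} {K : Set ℝ} {r : ℝ} (hr : -1 < r)
    (hK : IsCompact K) (hU : ContinuousOn (uncurry U) (Icc 0 1 ×ˢ K)) :
    ContinuousOn (fun τ => weightedMoment r (U · τ)) K := by
  refine ContinuousOn.continuousOn_intervalIntegral_mul (f := fun τ ξ => U ξ τ) hK ?_
    (intervalIntegral.intervalIntegrable_rpow' hr)
  rw [uIcc_of_le zero_le_one]
  exact hU.comp continuous_swap.continuousOn fun p hp => ⟨hp.2, hp.1⟩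

theorem ContinuousWithinAt.mul_le_sub_of_forall_mem_Ioo {ψ : ℝ → ℝ} {c t : ℝ} (ht : 0 < t)
    (hψ : ContinuousWithinAt ψ (Icc 0 t) 0) (h : ∀ s ∈ Ioo 0 t, c * (t - s) ≤ ψ t - ψ s) :
    c * t ≤ ψ t - ψ 0 := by
  rw [continuousWithinAt_Icc_iff_Ici ht] at hψ
  have hlim : Tendsto (fun s => ψ t - ψ s - c * (t - s)) (𝓝[>] 0)
      (𝓝 (ψ t - ψ 0 - c * (t - 0))) :=
    ((continuousWithinAt_const.sub (hψ.mono Ioi_subset_Ici_self)).sub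
      (continuousWithinAt_const.mul (continuousWithinAt_const.sub continuousWithinAt_id))).tendsto
  have := ge_of_tendsto (b := 0) hlim <|
    eventually_of_mem (Ioo_mem_nhdsGT ht) fun s hs => sub_nonneg.mpr (h s hs)
  linarith

structure IsSolutionOn (n M : ℝ) (U Uξ Uξξ Ut : ℝ → ℝ → ℝ) (s t : ℝ) : Prop where
  continuousOn : ContinuousOn (uncurry U) (Icc 0 1 ×ˢ Icc s t)
  hasDerivWithinAt_Uξ :
    ∀ τ ∈ Icc s t, ∀ ξ ∈ Icc (0:ℝ) 1, HasDerivWithinAt (U · τ) (Uξ ξ τ) (Icc 0 1) ξ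
  hasDerivAt_Uξξ : ∀ τ ∈ Icc s t, ∀ ξ ∈ Ioo (0:ℝ) 1, HasDerivAt (Uξ · τ) (Uξξ ξ τ) ξ
  hasDerivAt_Ut : ∀ ξ ∈ Ioc (0:ℝ) 1, ∀ τ ∈ Icc s t, HasDerivAt (U ξ ·) (Ut ξ τ) τ
  continuousOn_Uξ : ContinuousOn (uncurry Uξ) (Ioc 0 1 ×ˢ Icc s t)
  continuousOn_Ut : ContinuousOn (uncurry Ut) (Ioc 0 1 ×ˢ Icc s t)
  monotoneOn : ∀ τ ∈ Icc s t, MonotoneOn (U · τ) (Icc 0 1)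
  pde : ∀ τ ∈ Icc s t, ∀ ξ ∈ Ioo (0:ℝ) 1, Ut ξ τ = n ^ 2 * ξ ^ ((2:ℝ) - 2 / n) * Uξξ ξ τ
    + n * ξ ^ ((1:ℝ) - 2 / n) * U ξ τ ^ ((1:ℝ) / (n - 1)) * Uξ ξ τ
  left_bc : ∀ τ ∈ Icc s t, U 0 τ = 0
  right_bc : ∀ τ ∈ Icc s t, U 1 τ = M

namespace IsSolutionOn

variable {n M s t : ℝ} {U Uξ Uξξ Ut : ℝ → ℝ → ℝ} (h : IsSolutionOn n M U Uξ Uξξ Ut s t)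
include h

theorem nonneg {τ ξ : ℝ} (hτ : τ ∈ Icc s t) (hξ : ξ ∈ Icc (0:ℝ) 1) : 0 ≤ U ξ τ :=
  h.left_bc τ hτ ▸ h.monotoneOn τ hτ (left_mem_Icc.mpr zero_le_one) hξ hξ.1

theorem le_right {τ ξ : ℝ} (hτ : τ ∈ Icc s t) (hξ : ξ ∈ Icc (0:ℝ) 1) : U ξ τ ≤ M :=
  h.right_bc τ hτ ▸ h.monotoneOn τ hτ hξ (right_mem_Icc.mpr zero_le_one) hξ.2

theorem Uξ_nonneg {τ ξ : ℝ} (hτ : τ ∈ Icc s t) (hξ : ξ ∈ Icc (0:ℝ) 1) : 0 ≤ Uξ ξ τ :=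
  (h.hasDerivWithinAt_Uξ τ hτ ξ hξ).nonneg_of_monotoneOn
    (isPreconnected_Icc.preperfect_of_nontrivial
      ⟨0, left_mem_Icc.mpr zero_le_one, 1, right_mem_Icc.mpr zero_le_one, zero_ne_one⟩ ξ hξ)
    (h.monotoneOn τ hτ)

theorem continuousOn_flux (hn : 1 < n) :
    ContinuousOn (uncurry fun ξ τ => flux n ξ (U ξ τ) (Uξ ξ τ)) (Ioc 0 1 ×ˢ Icc s t) := by
  have hU : ContinuousOn (uncurry U) (Ioc 0 1 ×ˢ Icc s t) :=
    h.continuousOn.mono (prod_mono Ioc_subset_Icc_self subset_rfl)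
  exact (((continuousOn_const.mul continuous_fst.continuousOn).mul h.continuousOn_Uξ).sub
    (continuousOn_const.mul hU)).add (continuousOn_const.mul
      (hU.rpow_const fun _ _ => Or.inr (div_nonneg (by linarith) (by linarith))))

theorem hasDerivAt_flux (hn : 1 < n) {τ ξ : ℝ} (hτ : τ ∈ Icc s t) (hξ : ξ ∈ Ioo (0:ℝ) 1) :
    HasDerivAt (fun x => flux n x (U x τ) (Uξ x τ)) (ξ ^ (2 / n - 1) * Ut ξ τ) ξ := by
  have hU := (h.hasDerivWithinAt_Uξ τ hτ ξ (Ioo_subset_Icc_self hξ)).hasDerivAt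
    (Icc_mem_nhds hξ.1 hξ.2)
  rw [h.pde τ hτ ξ hξ, mul_assoc _ (U ξ τ ^ _), rpow_mul_rhs_eq hξ.1, ← mul_assoc]
  exact _root_.hasDerivAt_flux hn hU (h.hasDerivAt_Uξξ τ hτ ξ hξ)

theorem sub_integral_flux_le_weightedMoment_sub (hn : 1 < n) (hM : 0 < M) {A : ℝ}
    (hA : A = (n ^ 2 / (n - 1)) ^ (n - 1)) (hst : s ≤ t) {α : ℝ} (hα : α ∈ Ioo (0:ℝ) 1) :
    n ^ 2 * M * ((M / A) ^ (1 / (n - 1)) - 1) * (t - s)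
        - (∫ τ in s..t, flux n α (U α τ) (Uξ α τ)) - M * (α ^ (2 / n) / (2 / n))
      ≤ weightedMoment (2 / n - 1) (U · t) - weightedMoment (2 / n - 1) (U · s) := by
  set r := 2 / n - 1
  have hr : -1 < r := by simp only [r]; linarith [div_pos two_pos (by linarith : (0:ℝ) < n)]
  have hs : s ∈ Icc s t := left_mem_Icc.mpr hst
  have ht : t ∈ Icc s t := right_mem_Icc.mpr hst
  have hUc : ∀ τ ∈ Icc s t, ContinuousOn (U · τ) (Icc 0 1) := fun τ hτ =>
    h.continuousOn.uncurry_right τ hτ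
  have hDc : ContinuousOn (fun ξ => U ξ t - U ξ s) (Icc 0 1) := (hUc t ht).sub (hUc s hs)
  have hD₀₁ := intervalIntegrable_mul_rpow hr zero_le_one hDc
  have hD₀α := intervalIntegrable_mul_rpow hr hα.1.le (hDc.mono (Icc_subset_Icc_right hα.2.le))
  have hsplit : weightedMoment r (U · t) - weightedMoment r (U · s)
      = (∫ ξ in (0:ℝ)..α, (U ξ t - U ξ s) * ξ ^ r) + ∫ ξ in α..1, (U ξ t - U ξ s) * ξ ^ r := by
    rw [intervalIntegral.integral_add_adjacent_intervals hD₀α (hD₀α.symm.trans hD₀₁),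
      weightedMoment, weightedMoment, ← intervalIntegral.integral_sub
        (intervalIntegrable_mul_rpow hr zero_le_one (hUc t ht))
        (intervalIntegrable_mul_rpow hr zero_le_one (hUc s hs))]
    simp_rw [sub_mul]
  have hnear : -M * (α ^ (2 / n) / (2 / n)) ≤ ∫ ξ in (0:ℝ)..α, (U ξ t - U ξ s) * ξ ^ r := by
    have := neg_mul_integral_rpow_le (M := M) hr hα.1.le hD₀α fun ξ hξ => by
      have hξ' : ξ ∈ Icc (0:ℝ) 1 := Icc_subset_Icc_right hα.2.le hξ
      linarith [h.nonneg ht hξ', h.le_right hs hξ']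
    rwa [sub_add_cancel] at this
  have hIoc : Icc α 1 ⊆ Ioc 0 1 := fun ξ hξ => ⟨hα.1.trans_le hξ.1, hξ.2⟩
  have hfar : (∫ ξ in α..1, (U ξ t - U ξ s) * ξ ^ r)
      = ∫ τ in s..t, (flux n 1 (U 1 τ) (Uξ 1 τ) - flux n α (U α τ) (Uξ α τ)) := by
    rw [← integral_sub_eq_integral_sub_of_hasDerivAt hα.2.le hst
      (V := fun ξ τ => ξ ^ r * U ξ τ) (g := fun ξ τ => ξ ^ r * Ut ξ τ)
      (fun ξ hξ τ hτ => (h.hasDerivAt_Ut ξ (hIoc hξ) τ hτ).const_mul _)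
      (fun τ hτ ξ hξ => h.hasDerivAt_flux hn hτ ⟨hα.1.trans hξ.1, hξ.2⟩)
      (fun τ hτ => ((h.continuousOn_flux hn).uncurry_right τ hτ).mono hIoc)
      ((continuous_fst.continuousOn.rpow_const fun p hp =>
          Or.inl (hα.1.trans_le hp.1.1).ne').mul
        (h.continuousOn_Ut.mono (prod_mono hIoc subset_rfl)))]
    exact intervalIntegral.integral_congr fun ξ _ => by ring
  have hFi : ∀ ξ ∈ Ioc (0:ℝ) 1,
      IntervalIntegrable (fun τ => flux n ξ (U ξ τ) (Uξ ξ τ)) volume s t := fun ξ hξ =>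
    ((h.continuousOn_flux hn).uncurry_left ξ hξ).intervalIntegrable_of_Icc hst
  have hF₁ : n ^ 2 * M * ((M / A) ^ (1 / (n - 1)) - 1) * (t - s)
      ≤ ∫ τ in s..t, flux n 1 (U 1 τ) (Uξ 1 τ) := by
    have := intervalIntegral.integral_mono_on hst intervalIntegrable_const
      (hFi 1 (right_mem_Ioc.mpr zero_lt_one)) fun τ hτ => by
        rw [h.right_bc τ hτ]
        exact le_flux_one hn hM hA (h.Uξ_nonneg hτ (right_mem_Icc.mpr zero_le_one))
    rwa [intervalIntegral.integral_const, smul_eq_mul, mul_comm] at this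
  rw [hsplit, hfar, intervalIntegral.integral_sub (hFi 1 (right_mem_Ioc.mpr zero_lt_one))
    (hFi α ⟨hα.1, hα.2.le⟩)]
  linarith

theorem eventually_forall_le {ε : ℝ} (hε : 0 < ε) :
    ∀ᶠ b in 𝓝[>] (0:ℝ), ∀ τ ∈ Icc s t, U b τ ≤ ε := by
  obtain ⟨δ, hδ, hU⟩ := Metric.uniformContinuousOn_iff.mp
    ((isCompact_Icc.prod isCompact_Icc).uniformContinuousOn_of_continuous h.continuousOn) ε hε
  filter_upwards [Ioo_mem_nhdsGT (lt_min hδ one_pos)] with b hb τ hτ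
  have hdist : dist (b, τ) (0, τ) < δ := by
    rw [Prod.dist_eq, dist_self, Real.dist_0_eq_abs, abs_of_pos hb.1]
    exact max_lt (hb.2.trans_le (min_le_left _ _)) hδ
  have := hU (b, τ) ⟨⟨hb.1.le, hb.2.le.trans (min_le_right _ _)⟩, hτ⟩
    (0, τ) ⟨left_mem_Icc.mpr zero_le_one, hτ⟩ hdist
  rw [Real.dist_eq] at this
  simp only [uncurry_apply_pair, h.left_bc τ hτ, sub_zero] at this
  exact (le_abs_self _).trans this.le

theorem mul_sub_le_weightedMoment_sub (hn : 1 < n) (hM : 0 < M) {A : ℝ}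
    (hA : A = (n ^ 2 / (n - 1)) ^ (n - 1)) (hst : s ≤ t) :
    n ^ 2 * M * ((M / A) ^ (1 / (n - 1)) - 1) * (t - s)
      ≤ weightedMoment (2 / n - 1) (U · t) - weightedMoment (2 / n - 1) (U · s) := by
  set c := n ^ 2 * M * ((M / A) ^ (1 / (n - 1)) - 1)
  set Δ := weightedMoment (2 / n - 1) (U · t) - weightedMoment (2 / n - 1) (U · s)
  set p := n / (n - 1)
  have hp : 0 < p := div_pos (by linarith) (by linarith)
  have hn₂ : 0 < 2 / n := div_pos two_pos (by linarith)
  set B : ℝ → ℝ := fun ε => 2 * n ^ 2 * ε + (n - 1) * ε ^ p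
  suffices key : ∀ ε > 0, c * (t - s) - Δ ≤ (t - s) * B ε by
    have hlim : Tendsto (fun ε => (t - s) * B ε) (𝓝[>] 0) (𝓝 0) := by
      have := Real.continuous_rpow_const hp.le
      have hc : Continuous fun ε => (t - s) * B ε := by fun_prop
      simpa [B, Real.zero_rpow hp.ne'] using (hc.tendsto 0).mono_left nhdsWithin_le_nhds
    linarith [ge_of_tendsto hlim (eventually_nhdsWithin_of_forall key)]
  intro ε hε
  have hlim : Tendsto (fun b => (t - s) * B ε + M * (b ^ (2 / n) / (2 / n))) (𝓝[>] 0)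
      (𝓝 ((t - s) * B ε)) := by
    have := Real.continuous_rpow_const hn₂.le
    have hc : Continuous fun b => (t - s) * B ε + M * (b ^ (2 / n) / (2 / n)) := by fun_prop
    simpa [Real.zero_rpow hn₂.ne'] using (hc.tendsto 0).mono_left nhdsWithin_le_nhds
  refine ge_of_tendsto hlim ?_
  filter_upwards [h.eventually_forall_le hε, Ioo_mem_nhdsGT one_pos] with b hbε hb
  -- Averaging over `α ∈ [b/2, b]` controls the term `n²αUξ(α,τ)` of the flux.
  set a := b / 2
  have ha : 0 < a := half_pos hb.1
  have hab : a ≤ b := half_le_self hb.1.le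
  have hIoc : Icc a b ⊆ Ioc 0 1 := fun α hα => ⟨ha.trans_le hα.1, hα.2.trans hb.2.le⟩
  have hIcc : Icc a b ⊆ Icc 0 1 := hIoc.trans Ioc_subset_Icc_self
  have hFc : ContinuousOn (uncurry fun α τ => flux n α (U α τ) (Uξ α τ))
      (uIcc a b ×ˢ uIcc s t) := by
    rw [uIcc_of_le hab, uIcc_of_le hst]
    exact (h.continuousOn_flux hn).mono (prod_mono hIoc subset_rfl)
  have hFc' : ContinuousOn (uncurry fun τ α => flux n α (U α τ) (Uξ α τ))
      (uIcc s t ×ˢ uIcc a b) :=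
    hFc.comp continuous_swap.continuousOn fun q hq => ⟨hq.2, hq.1⟩
  have hlow : ∀ α ∈ Icc a b, c * (t - s) - Δ - M * (b ^ (2 / n) / (2 / n))
      ≤ ∫ τ in s..t, flux n α (U α τ) (Uξ α τ) := by
    intro α hα
    have hαb : M * (α ^ (2 / n) / (2 / n)) ≤ M * (b ^ (2 / n) / (2 / n)) := by
      gcongr
      · exact (ha.trans_le hα.1).le
      · exact hα.2
    linarith [h.sub_integral_flux_le_weightedMoment_sub hn hM hA hst
      ⟨ha.trans_le hα.1, hα.2.trans_lt hb.2⟩]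
  have hup : ∀ τ ∈ Icc s t, ∫ α in a..b, flux n α (U α τ) (Uξ α τ) ≤ (b - a) * B ε := by
    intro τ hτ
    have hUε : ∀ α ∈ Icc a b, U α τ ≤ ε := fun α hα =>
      (h.monotoneOn τ hτ (hIcc hα) (hIcc (right_mem_Icc.mpr hab)) hα.2).trans (hbε τ hτ)
    calc ∫ α in a..b, flux n α (U α τ) (Uξ α τ)
        ≤ n ^ 2 * b * ε + (b - a) * ((n - 1) * ε ^ p) :=
          integral_flux_le (u := (U · τ)) (u' := (Uξ · τ)) hn ha.le hab
            (fun α hα => (h.hasDerivWithinAt_Uξ τ hτ α (hIcc (Ioo_subset_Icc_self hα))).hasDerivAt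
              (Icc_mem_nhds (ha.trans hα.1) (hα.2.trans hb.2)))
            ((h.continuousOn.uncurry_right τ hτ).mono hIcc)
            ((h.continuousOn_Uξ.uncurry_right τ hτ).mono hIoc)
            (fun α hα => h.Uξ_nonneg hτ (hIcc hα)) (fun α hα => h.nonneg hτ (hIcc hα)) hUε
      _ = (b - a) * B ε := by simp only [B, a]; ring
  have hΦ : (b - a) * (c * (t - s) - Δ - M * (b ^ (2 / n) / (2 / n)))
      ≤ ∫ α in a..b, ∫ τ in s..t, flux n α (U α τ) (Uξ α τ) := by
    have := intervalIntegral.integral_mono_on hab intervalIntegrable_const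
      hFc.intervalIntegrable_intervalIntegral hlow
    rwa [intervalIntegral.integral_const, smul_eq_mul] at this
  have hΨ : ∫ τ in s..t, ∫ α in a..b, flux n α (U α τ) (Uξ α τ)
      ≤ (t - s) * ((b - a) * B ε) := by
    have := intervalIntegral.integral_mono_on hst hFc'.intervalIntegrable_intervalIntegral
      intervalIntegrable_const hup
    rwa [intervalIntegral.integral_const, smul_eq_mul] at this
  rw [hFc.intervalIntegral_swap] at hΦ
  have hba : 0 < b - a := by simp only [a]; linarith [hb.1]
  nlinarith

end IsSolutionOn

theorem moment_inequality_general
    (N : ℕ) (hN : 2 ≤ N)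
    (A : ℝ) (hA : A = ((N : ℝ) ^ 2 / ((N : ℝ) - 1)) ^ (N - 1))
    (M : ℝ) (hM : 0 < M)
    (T : EReal)
    (U Uξ Uξξ Ut : ℝ → ℝ → ℝ)
    (hcont : ContinuousOn (fun p : ℝ × ℝ => U p.1 p.2)
      (Icc 0 1 ×ˢ {t : ℝ | 0 ≤ t ∧ (t : EReal) < T}))
    (hC1 : ∀ t : ℝ, 0 ≤ t → (t : EReal) < T →
      (∀ ξ ∈ Icc (0:ℝ) 1, HasDerivWithinAt (fun s => U s t) (Uξ ξ t) (Icc 0 1) ξ) ∧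
      ContinuousOn (fun ξ => Uξ ξ t) (Icc 0 1))
    (hC21 : ∀ ξ ∈ Ioc (0:ℝ) 1, ∀ t : ℝ, 0 < t → (t : EReal) < T →
      HasDerivWithinAt (fun s => Uξ s t) (Uξξ ξ t) (Ioc 0 1) ξ ∧
      HasDerivAt (fun τ => U ξ τ) (Ut ξ t) t)
    (hUξcont : ContinuousOn (fun p : ℝ × ℝ => Uξ p.1 p.2)
      (Ioc 0 1 ×ˢ {t : ℝ | 0 < t ∧ (t : EReal) < T}))
    (hUtcont : ContinuousOn (fun p : ℝ × ℝ => Ut p.1 p.2)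
      (Ioc 0 1 ×ˢ {t : ℝ | 0 < t ∧ (t : EReal) < T}))
    (hmono : ∀ t : ℝ, 0 ≤ t → (t : EReal) < T → MonotoneOn (fun ξ => U ξ t) (Icc 0 1))
    (hPDE : ∀ ξ ∈ Ioo (0:ℝ) 1, ∀ t : ℝ, 0 < t → (t : EReal) < T →
      Ut ξ t = (N : ℝ) ^ 2 * ξ ^ ((2 : ℝ) - 2 / N) * Uξξ ξ t
        + (N : ℝ) * ξ ^ ((1 : ℝ) - 2 / N) * (U ξ t) ^ ((1 : ℝ) / ((N : ℝ) - 1)) * Uξ ξ t)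
    (hbc0 : ∀ t : ℝ, 0 < t → (t : EReal) < T → U 0 t = 0)
    (hbc1 : ∀ t : ℝ, 0 < t → (t : EReal) < T → U 1 t = M)
    (ψ : ℝ → ℝ)
    (hψ : ∀ t : ℝ, 0 ≤ t → (t : EReal) < T →
      ψ t = ∫ ξ in (0:ℝ)..1, U ξ t * ξ ^ ((2 : ℝ) / N - 1)) :
    ∀ t : ℝ, 0 < t → (t : EReal) < T →
      ψ t - ψ 0 ≥ (N : ℝ) ^ 2 * M * ((M / A) ^ ((1 : ℝ) / ((N : ℝ) - 1)) - 1) * t := by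
  intro t ht htT
  have hn : 1 < (N : ℝ) := by exact_mod_cast hN
  have hA' : A = ((N : ℝ) ^ 2 / ((N : ℝ) - 1)) ^ ((N : ℝ) - 1) := by
    rw [hA, ← Real.rpow_natCast, Nat.cast_sub (by omega), Nat.cast_one]
  have hlt : ∀ τ ≤ t, (τ : EReal) < T := fun τ hτ => (EReal.coe_le_coe_iff.mpr hτ).trans_lt htT
  have hψ' : ∀ τ ∈ Icc 0 t, ψ τ = weightedMoment (2 / N - 1) (U · τ) := fun τ hτ =>
    hψ τ hτ.1 (hlt τ hτ.2)
  have hsol : ∀ s ∈ Ioo 0 t, IsSolutionOn N M U Uξ Uξξ Ut s t := fun s hs => by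
    have hpos : ∀ τ ∈ Icc s t, 0 < τ ∧ (τ : EReal) < T := fun τ hτ =>
      ⟨hs.1.trans_le hτ.1, hlt τ hτ.2⟩
    exact
      { continuousOn := hcont.mono (prod_mono subset_rfl fun τ hτ => (hpos τ hτ).imp_left le_of_lt)
        hasDerivWithinAt_Uξ := fun τ hτ => (hC1 τ (hpos τ hτ).1.le (hpos τ hτ).2).1
        hasDerivAt_Uξξ := fun τ hτ ξ hξ =>
          (hC21 ξ (Ioo_subset_Ioc_self hξ) τ (hpos τ hτ).1 (hpos τ hτ).2).1.hasDerivAt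
            (Ioc_mem_nhds hξ.1 hξ.2)
        hasDerivAt_Ut := fun ξ hξ τ hτ => (hC21 ξ hξ τ (hpos τ hτ).1 (hpos τ hτ).2).2
        continuousOn_Uξ := hUξcont.mono (prod_mono subset_rfl hpos)
        continuousOn_Ut := hUtcont.mono (prod_mono subset_rfl hpos)
        monotoneOn := fun τ hτ => hmono τ (hpos τ hτ).1.le (hpos τ hτ).2
        pde := fun τ hτ ξ hξ => hPDE ξ hξ τ (hpos τ hτ).1 (hpos τ hτ).2
        left_bc := fun τ hτ => hbc0 τ (hpos τ hτ).1 (hpos τ hτ).2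
        right_bc := fun τ hτ => hbc1 τ (hpos τ hτ).1 (hpos τ hτ).2 }
  have hψc : ContinuousWithinAt ψ (Icc 0 t) 0 :=
    ((continuousOn_weightedMoment (by linarith [div_pos two_pos (by linarith : (0:ℝ) < N)])
      isCompact_Icc (hcont.mono (prod_mono subset_rfl fun τ hτ => ⟨hτ.1, hlt τ hτ.2⟩)))
        0 (left_mem_Icc.mpr ht.le)).congr hψ' (hψ' 0 (left_mem_Icc.mpr ht.le))
  refine hψc.mul_le_sub_of_forall_mem_Ioo ht fun s hs => ?_
  rw [hψ' t (right_mem_Icc.mpr ht.le), hψ' s (Ioo_subset_Icc_self hs)]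
  exact (hsol s hs).mul_sub_le_weightedMoment_sub hn hM hA' hs.2.le

/-- **Moment inequality.** For a nonnegative solution `U`, nondecreasing in `ξ`, of the
accumulated-density equation with `U(0,t)=0`, `U(1,t)=M`, the moment
`ψ(t) = ∫₀¹ U(ξ,t) ξ^{2/N−1} dξ` satisfies
`ψ(t) − ψ(0) ≥ N² M ((M/A)^{1/(N−1)} − 1) t` for `t ∈ (0,T)`. -/
theorem moment_inequality
    (N : ℕ) (hN : 2 ≤ N)
    (A : ℝ) (hA : A = ((N : ℝ) ^ 2 / ((N : ℝ) - 1)) ^ (N - 1))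
    (M : ℝ) (hM : 0 < M)
    (T : EReal) (hT : 0 < T)
    (U Uξ Uξξ Ut : ℝ → ℝ → ℝ)
    (hcont : ContinuousOn (fun p : ℝ × ℝ => U p.1 p.2)
      (Icc 0 1 ×ˢ {t : ℝ | 0 ≤ t ∧ (t : EReal) < T}))
    (hnonneg : ∀ ξ ∈ Icc (0:ℝ) 1, ∀ t : ℝ, 0 ≤ t → (t : EReal) < T → 0 ≤ U ξ t)
    (hC1 : ∀ t : ℝ, 0 ≤ t → (t : EReal) < T →
      (∀ ξ ∈ Icc (0:ℝ) 1, HasDerivWithinAt (fun s => U s t) (Uξ ξ t) (Icc 0 1) ξ) ∧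
      ContinuousOn (fun ξ => Uξ ξ t) (Icc 0 1))
    (hC21 : ∀ ξ ∈ Ioc (0:ℝ) 1, ∀ t : ℝ, 0 < t → (t : EReal) < T →
      HasDerivWithinAt (fun s => Uξ s t) (Uξξ ξ t) (Ioc 0 1) ξ ∧
      HasDerivAt (fun τ => U ξ τ) (Ut ξ t) t)
    (hUξcont : ContinuousOn (fun p : ℝ × ℝ => Uξ p.1 p.2)
      (Ioc 0 1 ×ˢ {t : ℝ | 0 < t ∧ (t : EReal) < T}))
    (hUξξcont : ContinuousOn (fun p : ℝ × ℝ => Uξξ p.1 p.2)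
      (Ioc 0 1 ×ˢ {t : ℝ | 0 < t ∧ (t : EReal) < T}))
    (hUtcont : ContinuousOn (fun p : ℝ × ℝ => Ut p.1 p.2)
      (Ioc 0 1 ×ˢ {t : ℝ | 0 < t ∧ (t : EReal) < T}))
    (hmono : ∀ t : ℝ, 0 ≤ t → (t : EReal) < T → MonotoneOn (fun ξ => U ξ t) (Icc 0 1))
    (hPDE : ∀ ξ ∈ Ioo (0:ℝ) 1, ∀ t : ℝ, 0 < t → (t : EReal) < T →
      Ut ξ t = (N : ℝ) ^ 2 * ξ ^ ((2 : ℝ) - 2 / N) * Uξξ ξ t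
        + (N : ℝ) * ξ ^ ((1 : ℝ) - 2 / N) * (U ξ t) ^ ((1 : ℝ) / ((N : ℝ) - 1)) * Uξ ξ t)
    (hbc0 : ∀ t : ℝ, 0 < t → (t : EReal) < T → U 0 t = 0)
    (hbc1 : ∀ t : ℝ, 0 < t → (t : EReal) < T → U 1 t = M)
    (ψ : ℝ → ℝ)
    (hψ : ∀ t : ℝ, 0 ≤ t → (t : EReal) < T →
      ψ t = ∫ ξ in (0:ℝ)..1, U ξ t * ξ ^ ((2 : ℝ) / N - 1)) :
    ∀ t : ℝ, 0 < t → (t : EReal) < T →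
      ψ t - ψ 0 ≥ (N : ℝ) ^ 2 * M * ((M / A) ^ ((1 : ℝ) / ((N : ℝ) - 1)) - 1) * t :=
  moment_inequality_general N hN A hA M hM T U Uξ Uξξ Ut hcont hC1 hC21 hUξcont hUtcont hmono hPDE
    hbc0 hbc1 ψ hψ
end

section
/- Let N ≥ 2 be an integer. Suppose W : [0,∞) → ℝ is nonnegative, continuous on [0,∞), twice continuously differentiable on (0,∞), satisfies N ξ W″(ξ) + W(ξ)^{1/(N−1)} W′(ξ) = 0 for all ξ > 0, and W(0) = 0. Then W satisfies the first-order equation ξ W′(ξ) = W(ξ) − ((N−1)/N²) W(ξ)^{N/(N−1)} for all ξ > 0. -/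
/-!
Differentiating `F(ξ) = N ξ W′ − N W + ((N−1)/N) W^{N/(N−1)}` and using the equation gives
`F′ = 0`, so `F` equals a constant `K` on `(0,∞)`. Since `W → 0` at `0`, this forces
`ξ W′(ξ) → K/N`; with `ξ = eᵗ` the function `t ↦ W(eᵗ)` then has derivative tending to `K/N`
as `t → −∞` while itself converging, which is only possible for `K = 0`.
-/

open Set Filter Topology Real

theorem eq_zero_of_tendsto_atBot_of_tendsto_deriv {h h' : ℝ → ℝ} {a L : ℝ}
    (hd : ∀ t, HasDerivAt h (h' t) t) (hh : Tendsto h atBot (𝓝 a))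
    (hh' : Tendsto h' atBot (𝓝 L)) : L = 0 := by
  have hslope : ∀ t, ∃ c ∈ Ioo (t - 1) t, h' c = h t - h (t - 1) := by
    intro t
    obtain ⟨c, hc, hc'⟩ := exists_hasDerivAt_eq_slope h h' (sub_one_lt t)
      (fun x _ => (hd x).continuousAt.continuousWithinAt) (fun x _ => hd x)
    exact ⟨c, hc, by simpa using hc'⟩
  choose c hc hc' using hslope
  have hc_atBot : Tendsto c atBot atBot := tendsto_atBot_mono (fun t => (hc t).2.le) tendsto_id
  have hdiff : Tendsto (fun t => h t - h (t - 1)) atBot (𝓝 (a - a)) :=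
    hh.sub (hh.comp (tendsto_atBot_add_const_right _ (-1) tendsto_id))
  rw [sub_self] at hdiff
  exact tendsto_nhds_unique ((hh'.comp hc_atBot).congr hc') hdiff

theorem eq_zero_of_tendsto_mul_deriv_nhdsGT_zero {g g' : ℝ → ℝ} {a L : ℝ}
    (hd : ∀ x, 0 < x → HasDerivAt g (g' x) x) (hg : Tendsto g (𝓝[>] 0) (𝓝 a))
    (hL : Tendsto (fun x => x * g' x) (𝓝[>] 0) (𝓝 L)) : L = 0 :=
  eq_zero_of_tendsto_atBot_of_tendsto_deriv (h := g ∘ exp) (h' := fun t => g' (exp t) * exp t)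
    (fun t => (hd _ (exp_pos t)).comp t (hasDerivAt_exp t))
    (hg.comp tendsto_exp_atBot_nhdsGT)
    (by simpa only [Function.comp_def, mul_comm] using hL.comp tendsto_exp_atBot_nhdsGT)

theorem hasDerivAt_and_hasDerivAt_deriv_of_contDiffOn {f : ℝ → ℝ} {s : Set ℝ}
    (hf : ContDiffOn ℝ 2 f s) (hs : IsOpen s) {x : ℝ} (hx : x ∈ s) :
    HasDerivAt f (deriv f x) x ∧ HasDerivAt (deriv f) (deriv (deriv f) x) x :=
  ⟨((hf.differentiableOn (by norm_num)).differentiableAt (hs.mem_nhds hx)).hasDerivAt,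
    (((hf.deriv_of_isOpen hs (by norm_num : (1 : WithTop ℕ∞) + 1 ≤ 2)).differentiableOn
      one_ne_zero).differentiableAt (hs.mem_nhds hx)).hasDerivAt⟩

noncomputable def firstIntegral (n : ℝ) (W : ℝ → ℝ) (x : ℝ) : ℝ :=
  n * x * deriv W x - n * W x + (n - 1) / n * W x ^ (n / (n - 1))

theorem hasDerivAt_firstIntegral {n : ℝ} (hn : 1 < n) {W : ℝ → ℝ} {x : ℝ}
    (h1 : HasDerivAt W (deriv W x) x) (h2 : HasDerivAt (deriv W) (deriv (deriv W) x) x) :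
    HasDerivAt (firstIntegral n W)
      (n * x * deriv (deriv W) x + W x ^ (1 / (n - 1)) * deriv W x) x := by
  have hn1 : n - 1 ≠ 0 := by linarith
  have hn0 : n ≠ 0 := by linarith
  have hp : 1 ≤ n / (n - 1) := by rw [le_div_iff₀ (by linarith)]; linarith
  have hp1 : n / (n - 1) - 1 = 1 / (n - 1) := by field_simp; ring
  have hpow := (hasDerivAt_rpow_const (x := W x) (Or.inr hp)).comp x h1
  refine (((((hasDerivAt_id x).const_mul n).mul h2).sub (h1.const_mul n)).add
    (hpow.const_mul ((n - 1) / n))).congr_deriv ?_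
  rw [hp1, id]
  field_simp
  ring

theorem firstIntegral_eq_of_ode {n : ℝ} (hn : 1 < n) {W : ℝ → ℝ}
    (hC2 : ContDiffOn ℝ 2 W (Ioi 0))
    (hODE : ∀ x, 0 < x → n * x * deriv (deriv W) x + W x ^ (1 / (n - 1)) * deriv W x = 0)
    {x y : ℝ} (hx : 0 < x) (hy : 0 < y) : firstIntegral n W x = firstIntegral n W y := by
  have hF : ∀ z ∈ Ioi (0 : ℝ), HasDerivAt (firstIntegral n W) 0 z := fun z hz => by
    obtain ⟨h1, h2⟩ := hasDerivAt_and_hasDerivAt_deriv_of_contDiffOn hC2 isOpen_Ioi hz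
    simpa only [hODE z hz] using hasDerivAt_firstIntegral hn h1 h2
  exact isOpen_Ioi.is_const_of_deriv_eq_zero isPreconnected_Ioi
    (fun z hz => (hF z hz).differentiableAt.differentiableWithinAt)
    (fun z hz => (hF z hz).deriv) hx hy

theorem tendsto_mul_deriv_of_firstIntegral_eq {n K : ℝ} (hn : 1 < n) {W : ℝ → ℝ}
    (hW : Tendsto W (𝓝[>] 0) (𝓝 0)) (hK : ∀ x, 0 < x → firstIntegral n W x = K) :
    Tendsto (fun x => x * deriv W x) (𝓝[>] 0) (𝓝 (K / n)) := by
  have hp : 0 < n / (n - 1) := div_pos (by linarith) (by linarith)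
  have hlim : Tendsto (fun x => (K + n * W x - (n - 1) / n * W x ^ (n / (n - 1))) / n)
      (𝓝[>] 0) (𝓝 ((K + n * 0 - (n - 1) / n * 0 ^ (n / (n - 1))) / n)) :=
    ((tendsto_const_nhds.add (hW.const_mul n)).sub
      ((hW.rpow_const (Or.inr hp.le)).const_mul _)).div_const n
  rw [zero_rpow hp.ne'] at hlim
  simp only [mul_zero, add_zero, sub_zero] at hlim
  refine hlim.congr' (eventually_nhdsWithin_of_forall fun x hx => ?_)
  rw [← hK x hx, firstIntegral]
  field_simp
  ring

theorem second_order_to_first_order_general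
    (N : ℕ) (hN : 2 ≤ N)
    (W : ℝ → ℝ)
    (hcont : ContinuousOn W (Ici 0))
    (hC2 : ContDiffOn ℝ 2 W (Ioi 0))
    (hODE : ∀ ξ : ℝ, 0 < ξ →
      (N : ℝ) * ξ * deriv (deriv W) ξ + (W ξ) ^ ((1 : ℝ) / ((N : ℝ) - 1)) * deriv W ξ = 0)
    (hW0 : W 0 = 0) :
    ∀ ξ : ℝ, 0 < ξ →
      ξ * deriv W ξ
        = W ξ - (((N : ℝ) - 1) / (N : ℝ) ^ 2) * (W ξ) ^ ((N : ℝ) / ((N : ℝ) - 1)) := by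
  have hn : (1 : ℝ) < N := by exact_mod_cast hN
  have hN0 : (N : ℝ) ≠ 0 := by positivity
  set K := firstIntegral N W 1
  have hconst : ∀ x, 0 < x → firstIntegral N W x = K :=
    fun x hx => firstIntegral_eq_of_ode hn hC2 hODE hx one_pos
  have hW : Tendsto W (𝓝[>] 0) (𝓝 0) := by
    simpa only [hW0] using ((hcont 0 self_mem_Ici).mono Ioi_subset_Ici_self).tendsto
  have hK : K / N = 0 := eq_zero_of_tendsto_mul_deriv_nhdsGT_zero
    (fun x hx => (hasDerivAt_and_hasDerivAt_deriv_of_contDiffOn hC2 isOpen_Ioi hx).1) hW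
    (tendsto_mul_deriv_of_firstIntegral_eq hn hW hconst)
  intro ξ hξ
  have hξK := hconst ξ hξ
  rw [div_eq_zero_iff, or_iff_left hN0] at hK
  rw [hK, firstIntegral] at hξK
  field_simp at hξK ⊢
  linear_combination hξK

/-- **Reduction to a first-order ODE.**
If `W : [0,∞) → ℝ` is nonnegative, continuous on `[0,∞)`, `C²` on `(0,∞)`, solves
`N ξ W″ + W^{1/(N−1)} W′ = 0` on `(0,∞)` and `W(0) = 0`, then
`ξ W′(ξ) = W(ξ) − ((N−1)/N²) W(ξ)^{N/(N−1)}` for all `ξ > 0`. -/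
theorem second_order_to_first_order
    (N : ℕ) (hN : 2 ≤ N)
    (W : ℝ → ℝ)
    (hnonneg : ∀ ξ : ℝ, 0 ≤ ξ → 0 ≤ W ξ)
    (hcont : ContinuousOn W (Ici 0))
    (hC2 : ContDiffOn ℝ 2 W (Ioi 0))
    (hODE : ∀ ξ : ℝ, 0 < ξ →
      (N : ℝ) * ξ * deriv (deriv W) ξ + (W ξ) ^ ((1 : ℝ) / ((N : ℝ) - 1)) * deriv W ξ = 0)
    (hW0 : W 0 = 0) :
    ∀ ξ : ℝ, 0 < ξ →
      ξ * deriv W ξ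
        = W ξ - (((N : ℝ) - 1) / (N : ℝ) ^ 2) * (W ξ) ^ ((N : ℝ) / ((N : ℝ) - 1)) :=
  second_order_to_first_order_general N hN W hcont hC2 hODE hW0
end
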